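/- arXiv:0801.2611 — 2 statements merged into one kernel-verified Lean document; each statement's English description precedes it below -/
import Mathlib

section
/- Let η be the m×m complex matrix with entries η_{i+1, i} = i for i = 1, …, m−1 and all other entries 0 (entries 1, 2, …, m−1 below the diagonal). Then for every t ∈ ℂ and every k with 0 ≤ k < m, the span of the first k+1 columns of exp(tη) equals the span of γ(t), γ′(t), …, γ^{(k)}(t), where γ(t) = (1, t, t², …, t^{m−1})ᵀ. In particular exp(tη) e₁ spans the same line as γ(t). -/
open scoped Nat

/-- The principal nilpotent of `𝔰𝔩_m` with subdiagonal entries `1, 2, …, m-1`. -/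
def etaSL (m : ℕ) : Matrix (Fin m) (Fin m) ℂ := fun a b =>
  if (a : ℕ) = (b : ℕ) + 1 then ((b : ℕ) + 1 : ℂ) else 0

/-- The rational normal curve `γ(t) = (1, t, t², …, t^{m-1})`. -/
def gammaRNC (m : ℕ) (t : ℂ) : Fin m → ℂ := fun i => t ^ (i : ℕ)

lemma etaSL_pow_apply (m p : ℕ) (a b : Fin m) :
    (etaSL m ^ p) a b =
      if (a : ℕ) = (b : ℕ) + p then ((((b : ℕ) + p).descFactorial p : ℕ) : ℂ) else 0 := by
  induction p generalizing a b with
  | zero =>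
    simp [Matrix.one_apply, Fin.val_inj, ← Fin.val_inj]
  | succ p ih =>
    rw [pow_succ, Matrix.mul_apply]
    by_cases hb : (b : ℕ) + 1 < m
    · rw [Finset.sum_eq_single (⟨(b : ℕ) + 1, hb⟩ : Fin m)]
      · rw [ih]
        simp only [etaSL]
        simp only [if_true]
        by_cases ha : (a : ℕ) = (b : ℕ) + 1 + p
        · rw [if_pos ha, if_pos (by omega)]
          have e1 : (b : ℕ) + (p + 1) = (b : ℕ) + 1 + p := by omega
          rw [e1, Nat.descFactorial_succ]
          have e2 : (b : ℕ) + 1 + p - p = (b : ℕ) + 1 := by omega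
          rw [e2]
          push_cast
          ring
        · rw [if_neg ha, if_neg (by omega), zero_mul]
      · intro c _ hc
        have : (c : ℕ) ≠ (b : ℕ) + 1 := fun h => hc (Fin.ext h)
        simp [etaSL, this]
      · intro h
        exact absurd (Finset.mem_univ _) h
    · have h0 : ∀ c : Fin m, (etaSL m ^ p) a c * etaSL m c b = 0 := by
        intro c
        have : (c : ℕ) ≠ (b : ℕ) + 1 := by omega
        simp [etaSL, this]
      rw [Finset.sum_congr rfl fun c _ => h0 c, Finset.sum_const_zero]
      rw [if_neg (by omega)]

lemma etaSL_pow_eq_zero (m p : ℕ) (hp : m ≤ p) : etaSL m ^ p = 0 := by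
  ext a b
  rw [etaSL_pow_apply]
  rw [if_neg (by omega)]
  rfl

lemma exp_smul_etaSL_apply (m : ℕ) (t : ℂ) (i j : Fin m) :
    NormedSpace.exp (t • etaSL m) i j =
      if (j : ℕ) ≤ (i : ℕ) then
        ((((i : ℕ) - (j : ℕ))! : ℂ)⁻¹ * (((i : ℕ).descFactorial ((i : ℕ) - (j : ℕ)) : ℕ) : ℂ))
          * t ^ ((i : ℕ) - (j : ℕ))
      else 0 := by
  have hexp : NormedSpace.exp (t • etaSL m)
      = ∑ n ∈ Finset.range m, ((n ! : ℂ)⁻¹ • (t • etaSL m) ^ n) := by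
    rw [NormedSpace.exp_eq_tsum ℂ]
    exact tsum_eq_sum (by
      intro n hn
      rw [smul_pow, etaSL_pow_eq_zero m n (by simpa using hn)]
      simp)
  rw [hexp]
  rw [Matrix.sum_apply]
  have hterm : ∀ n, ((n ! : ℂ)⁻¹ • (t • etaSL m) ^ n) i j
      = if (i : ℕ) = (j : ℕ) + n then
          ((n ! : ℂ)⁻¹ * ((((j : ℕ) + n).descFactorial n : ℕ) : ℂ)) * t ^ n else 0 := by
    intro n
    rw [smul_pow, Matrix.smul_apply, Matrix.smul_apply, etaSL_pow_apply]
    by_cases h : (i : ℕ) = (j : ℕ) + n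
    · rw [if_pos h, if_pos h]; simp [smul_eq_mul]; ring
    · rw [if_neg h, if_neg h]; simp
  rw [Finset.sum_congr rfl fun n _ => hterm n]
  by_cases hij : (j : ℕ) ≤ (i : ℕ)
  · rw [Finset.sum_eq_single ((i : ℕ) - (j : ℕ))]
    · rw [if_pos (by omega), if_pos hij]
      have e : (j : ℕ) + ((i : ℕ) - (j : ℕ)) = (i : ℕ) := by omega
      rw [e]
    · intro n _ hn
      rw [if_neg (by omega)]
    · intro h
      exact absurd (Finset.mem_range.mpr (by omega)) h
  · rw [if_neg hij, Finset.sum_eq_zero]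
    intro n _
    rw [if_neg (by omega)]

lemma iteratedDeriv_pow' (q n : ℕ) :
    iteratedDeriv n (fun s : ℂ => s ^ q) =
      fun t => ((q.descFactorial n : ℕ) : ℂ) * t ^ (q - n) := by
  induction n with
  | zero => simp
  | succ n ih =>
    rw [iteratedDeriv_succ, ih]
    funext t
    rw [deriv_const_mul _ (by fun_prop)]
    rw [deriv_pow_field]
    have : q.descFactorial (n + 1) = (q - n) * q.descFactorial n := Nat.descFactorial_succ q n
    rw [this]
    push_cast
    have : q - n - 1 = q - (n + 1) := by omega
    rw [this]
    ring

/-- Dale Peterson's observation: the span of the first `k+1` columns of `exp (t η)`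
equals the span of `γ(t), γ'(t), …, γ^{(k)}(t)`. -/
theorem stmt3 (m : ℕ) (t : ℂ) (k : ℕ) (hk : k < m) :
    Submodule.span ℂ
        (Set.range fun (j : Fin (k + 1)) =>
          fun i : Fin m => NormedSpace.exp (t • etaSL m) i ⟨(j : ℕ), lt_of_le_of_lt (Nat.lt_succ_iff.mp j.isLt) hk⟩)
      = Submodule.span ℂ
        (Set.range fun (j : Fin (k + 1)) =>
          fun i : Fin m => iteratedDeriv (j : ℕ) (fun s => gammaRNC m s i) t) := by
  have key : ∀ j : Fin (k + 1),
      (fun i : Fin m => iteratedDeriv (j : ℕ) (fun s => gammaRNC m s i) t)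
        = (((j : ℕ)! : ℂ)) • (fun i : Fin m =>
            NormedSpace.exp (t • etaSL m) i
              ⟨(j : ℕ), lt_of_le_of_lt (Nat.lt_succ_iff.mp j.isLt) hk⟩) := by
    intro j
    funext i
    simp only [Pi.smul_apply, smul_eq_mul, gammaRNC]
    rw [show (fun s : ℂ => s ^ (i : ℕ)) = fun s : ℂ => s ^ (i : ℕ) from rfl,
      iteratedDeriv_pow' (i : ℕ) (j : ℕ)]
    rw [exp_smul_etaSL_apply]
    by_cases h : (j : ℕ) ≤ (i : ℕ)
    · rw [if_pos h]
      have h1 : ((i : ℕ) - ((i : ℕ) - (j : ℕ)))! * (i : ℕ).descFactorial ((i : ℕ) - (j : ℕ))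
          = (i : ℕ)! := Nat.factorial_mul_descFactorial (by omega)
      have h2 : ((i : ℕ) - (j : ℕ))! * (i : ℕ).descFactorial (j : ℕ) = (i : ℕ)! :=
        Nat.factorial_mul_descFactorial h
      have h3 : (i : ℕ) - ((i : ℕ) - (j : ℕ)) = (j : ℕ) := by omega
      rw [h3] at h1
      have hfac : (((i : ℕ) - (j : ℕ))! : ℂ) ≠ 0 := Nat.cast_ne_zero.mpr (Nat.factorial_ne_zero _)
      have hC : ((j : ℕ)! : ℂ) * (i : ℕ).descFactorial ((i : ℕ) - (j : ℕ))
          = (((i : ℕ) - (j : ℕ))! : ℂ) * (i : ℕ).descFactorial (j : ℕ) := by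
        rw [← Nat.cast_mul, ← Nat.cast_mul, h1, h2]
      have goal' : (((i : ℕ).descFactorial (j : ℕ) : ℕ) : ℂ)
          = ((j : ℕ)! : ℂ) * ((((i : ℕ) - (j : ℕ))! : ℂ)⁻¹
              * (((i : ℕ).descFactorial ((i : ℕ) - (j : ℕ)) : ℕ) : ℂ)) := by
        field_simp
        linear_combination -hC
      rw [goal']
      ring
    · rw [if_neg h]
      rw [Nat.descFactorial_eq_zero_iff_lt.mpr (by omega)]
      simp
  apply le_antisymm
  · rw [Submodule.span_le]
    rintro x ⟨j, rfl⟩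
    simp only [SetLike.mem_coe]
    have hne : (((j : ℕ)! : ℂ)) ≠ 0 := Nat.cast_ne_zero.mpr (Nat.factorial_ne_zero _)
    have heq : (fun i : Fin m => NormedSpace.exp (t • etaSL m) i
          ⟨(j : ℕ), lt_of_le_of_lt (Nat.lt_succ_iff.mp j.isLt) hk⟩)
        = (((j : ℕ)! : ℂ))⁻¹ • (fun i : Fin m =>
            iteratedDeriv (j : ℕ) (fun s => gammaRNC m s i) t) := by
      rw [key j, inv_smul_smul₀ hne]
    show (fun i : Fin m => NormedSpace.exp (t • etaSL m) i
        ⟨(j : ℕ), lt_of_le_of_lt (Nat.lt_succ_iff.mp j.isLt) hk⟩) ∈ _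
    rw [heq]
    exact Submodule.smul_mem _ _ (Submodule.subset_span ⟨j, rfl⟩)
  · rw [Submodule.span_le]
    rintro x ⟨j, rfl⟩
    simp only [SetLike.mem_coe]
    show (fun i : Fin m => iteratedDeriv (j : ℕ) (fun s => gammaRNC m s i) t) ∈ _
    rw [key j]
    exact Submodule.smul_mem _ _ (Submodule.subset_span ⟨j, rfl⟩)
end

section
/- Let ⟨·,·⟩ be a bilinear form on ℂ^m with matrix A, and let η satisfy ηᵀA + Aη = 0. If v, w ∈ ℂ^m satisfy ⟨η^i v, η^j w⟩ = 0 whenever i + j ≤ k, then for all t ∈ ℂ the osculating spaces E(t) = span{d^i/dt^i exp(tη)v : i ≤ a} and F(t) = span{d^j/dt^j exp(tη)w : j ≤ b} are orthogonal whenever a + b ≤ k. -/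
/-! The `i`-th derivative of `s ↦ exp(sη)v` is `exp(sη)ηⁱv`, and `ηᵀA + Aη = 0` makes every
`exp(tη)` an isometry of the form `⟨x, y⟩ = x ⬝ᵥ A y`, i.e. `exp(tη)ᵀ A exp(tη) = A`. So the
pairing of the `i`-th derivative of the `v`-orbit with the `j`-th derivative of the `w`-orbit at
`t` equals `⟨ηⁱv, ηʲw⟩`, which vanishes for `i + j ≤ k`; bilinearity passes this to the spans. -/

open Matrix NormedSpace

section

variable {𝕂 n : Type*} [RCLike 𝕂] [Fintype n] [DecidableEq n]

-- Matrices carry no global norm; the operator norm only serves to apply Banach-algebra lemmas,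
-- and `exp` does not depend on it.
open scoped Norms.Operator in
theorem Matrix.hasDerivAt_exp_smul_mulVec_apply (η : Matrix n n 𝕂) (u : n → 𝕂) (i : n) (t : 𝕂) :
    HasDerivAt (fun s : 𝕂 => (exp (s • η) *ᵥ u) i) ((exp (t • η) *ᵥ (η *ᵥ u)) i) t := by
  let evalAt : Matrix n n 𝕂 →L[𝕂] 𝕂 :=
    (LinearMap.proj i ∘ₗ (mulVecBilin 𝕂 𝕂).flip u).toContinuousLinearMap
  rw [mulVec_mulVec]
  exact evalAt.hasFDerivAt.comp_hasDerivAt t (hasDerivAt_exp_smul_const (𝕂 := 𝕂) η t)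

theorem Matrix.iteratedDeriv_exp_smul_mulVec_apply (η : Matrix n n 𝕂) (k : ℕ) (u : n → 𝕂)
    (i : n) :
    iteratedDeriv k (fun s : 𝕂 => (exp (s • η) *ᵥ u) i)
      = fun s => (exp (s • η) *ᵥ (η ^ k *ᵥ u)) i := by
  induction k generalizing u with
  | zero => simp
  | succ k ih =>
    have hderiv : deriv (fun s : 𝕂 => (exp (s • η) *ᵥ u) i)
        = fun s => (exp (s • η) *ᵥ (η *ᵥ u)) i :=
      funext fun s => (hasDerivAt_exp_smul_mulVec_apply η u i s).deriv
    rw [iteratedDeriv_succ', hderiv, ih, mulVec_mulVec, ← pow_succ]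

theorem Matrix.transpose_exp_mul_mul_exp {A η : Matrix n n 𝕂} (hη : ηᵀ * A + A * η = 0)
    (t : 𝕂) : (exp (t • η))ᵀ * A * exp (t • η) = A := by
  have hsemiconj : SemiconjBy A (t • η) (-(t • ηᵀ)) := by
    rw [SemiconjBy, mul_smul_comm, neg_mul, smul_mul_assoc, eq_neg_of_add_eq_zero_left hη,
      smul_neg, neg_neg]
  rw [← exp_transpose, transpose_smul, ← neg_neg (t • ηᵀ)]
  exact open scoped Norms.Operator in hsemiconj.exp_neg_mul_mul_exp_eq_self

end

theorem Matrix.dotProduct_mulVec_mulVec_of_transpose_mul_mul {R n : Type*} [CommSemiring R]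
    [Fintype n] {A M : Matrix n n R} (hM : Mᵀ * A * M = A) (x y : n → R) :
    (M *ᵥ x) ⬝ᵥ (A *ᵥ (M *ᵥ y)) = x ⬝ᵥ (A *ᵥ y) := by
  rw [dotProduct_mulVec, ← vecMul_transpose, vecMul_vecMul, ← dotProduct_mulVec, mulVec_mulVec, hM]

theorem LinearMap.apply_eq_zero_of_mem_span_of_mem_span {R M N P : Type*} [CommSemiring R]
    [AddCommMonoid M] [AddCommMonoid N] [AddCommMonoid P] [Module R M] [Module R N] [Module R P]
    (f : M →ₗ[R] N →ₗ[R] P) {s : Set M} {t : Set N} (hst : ∀ x ∈ s, ∀ y ∈ t, f x y = 0)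
    {x : M} {y : N} (hx : x ∈ Submodule.span R s) (hy : y ∈ Submodule.span R t) : f x y = 0 := by
  have hmem := Submodule.apply_mem_map₂ f hx hy
  rwa [Submodule.map₂_span_span, Submodule.span_eq_bot.mpr, Submodule.mem_bot] at hmem
  rintro _ ⟨x, hx, y, hy, rfl⟩
  exact hst x hx y hy

theorem stmt13_general (m : ℕ) (A η : Matrix (Fin m) (Fin m) ℂ)
    (hη : η.transpose * A + A * η = 0)
    (v w : Fin m → ℂ) (k : ℕ)
    (hvw : ∀ i j : ℕ, i + j ≤ k →
      dotProduct ((η ^ i).mulVec v) (A.mulVec ((η ^ j).mulVec w)) = 0)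
    (t : ℂ) (a b : ℕ) (hab : a + b ≤ k) :
    ∀ x ∈ Submodule.span ℂ (Set.range fun (i : Fin (a + 1)) =>
        fun idx : Fin m => iteratedDeriv (i : ℕ)
          (fun s => (NormedSpace.exp (s • η)).mulVec v idx) t),
      ∀ y ∈ Submodule.span ℂ (Set.range fun (j : Fin (b + 1)) =>
        fun idx : Fin m => iteratedDeriv (j : ℕ)
          (fun s => (NormedSpace.exp (s • η)).mulVec w idx) t),
        dotProduct x (A.mulVec y) = 0 := by
  intro x hx y hy
  rw [← toLinearMap₂'_apply']
  refine LinearMap.apply_eq_zero_of_mem_span_of_mem_span _ ?_ hx hy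
  rintro _ ⟨i, rfl⟩ _ ⟨j, rfl⟩
  simp only [iteratedDeriv_exp_smul_mulVec_apply, toLinearMap₂'_apply']
  rw [dotProduct_mulVec_mulVec_of_transpose_mul_mul (transpose_exp_mul_mul_exp hη t)]
  exact hvw i j (by omega)

/-- Orthogonality relations among `η`-iterates of `v` and `w` propagate to
the osculating spaces of the orbit curves `exp(tη)v` and `exp(tη)w`. -/
theorem stmt13 (m : ℕ) (A η : Matrix (Fin m) (Fin m) ℂ)
    (hη : η.transpose * A + A * η = 0) (hnil : IsNilpotent η)
    (v w : Fin m → ℂ) (k : ℕ)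
    (hvw : ∀ i j : ℕ, i + j ≤ k →
      dotProduct ((η ^ i).mulVec v) (A.mulVec ((η ^ j).mulVec w)) = 0)
    (t : ℂ) (a b : ℕ) (hab : a + b ≤ k) :
    ∀ x ∈ Submodule.span ℂ (Set.range fun (i : Fin (a + 1)) =>
        fun idx : Fin m => iteratedDeriv (i : ℕ)
          (fun s => (NormedSpace.exp (s • η)).mulVec v idx) t),
      ∀ y ∈ Submodule.span ℂ (Set.range fun (j : Fin (b + 1)) =>
        fun idx : Fin m => iteratedDeriv (j : ℕ)
          (fun s => (NormedSpace.exp (s • η)).mulVec w idx) t),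
        dotProduct x (A.mulVec y) = 0 :=
  stmt13_general m A η hη v w k hvw t a b hab
end
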